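/- arXiv:math/9906157 — 3 statements merged into one kernel-verified Lean document; each statement's English description precedes it below -/
import Mathlib

section
/- If the coassociative coalgebra (C,Δ) is skew cocommutative (τ∘Δ = −Δ) and (L,[·,·]) is a Lie algebra, then the convolution bracket Φ(f,g)(c) = Σ [f(c₍₁₎), g(c₍₂₎)] on Hom(C,L) is symmetric (Φ(f,g) = Φ(g,f)) and satisfies the Jacobi identity Φ(f,Φ(g,h)) + Φ(h,Φ(f,g)) + Φ(g,Φ(h,f)) = 0. -/
open TensorProduct

variable (k C L : Type*) [Field k] [AddCommGroup C] [Module k C]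
  [LieRing L] [LieAlgebra k L]

/-- The Lie bracket of `L` as a linear map `L ⊗ L →ₗ L`. -/
noncomputable def bracketLin : L ⊗[k] L →ₗ[k] L :=
  TensorProduct.lift (LinearMap.mk₂ k (fun x y => ⁅x, y⁆) add_lie smul_lie lie_add lie_smul)

/-- The convolution bracket `Φ(f,g) = [·,·] ∘ (f⊗g) ∘ Δ` on `Hom(C,L)`. -/
noncomputable def convBr (Δ : C →ₗ[k] C ⊗[k] C) (f g : C →ₗ[k] L) : C →ₗ[k] L :=
  bracketLin k L ∘ₗ TensorProduct.map f g ∘ₗ Δ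

lemma bracketLin_tmul (x y : L) : bracketLin k L (x ⊗ₜ[k] y) = ⁅x, y⁆ := rfl

lemma bracketLin_comm_swap (f g : C →ₗ[k] L) (t : C ⊗[k] C) :
    bracketLin k L (TensorProduct.map f g ((TensorProduct.comm k C C) t)) =
      - bracketLin k L (TensorProduct.map g f t) := by
  induction t using TensorProduct.induction_on with
  | zero => simp
  | tmul x y =>
    simp only [TensorProduct.comm_tmul, TensorProduct.map_tmul, bracketLin_tmul]
    exact (lie_skew _ _).symm
  | add a b ha hb => simp [ha, hb]; abel

lemma map_neg_right {M N P Q : Type*} [AddCommGroup M] [AddCommGroup N]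
    [AddCommGroup P] [AddCommGroup Q] [Module k M] [Module k N] [Module k P] [Module k Q]
    (f : M →ₗ[k] P) (g : N →ₗ[k] Q) :
    TensorProduct.map (R := k) f (-g) = - TensorProduct.map f g := by
  apply TensorProduct.ext'
  intro x y
  simp [tmul_neg]

lemma map_neg_left {M N P Q : Type*} [AddCommGroup M] [AddCommGroup N]
    [AddCommGroup P] [AddCommGroup Q] [Module k M] [Module k N] [Module k P] [Module k Q]
    (f : M →ₗ[k] P) (g : N →ₗ[k] Q) :
    TensorProduct.map (R := k) (-f) g = - TensorProduct.map f g := by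
  apply TensorProduct.ext'
  intro x y
  simp [neg_tmul]

/-- If the coassociative coalgebra `(C,Δ)` is skew cocommutative (`τ∘Δ = −Δ`),
the convolution bracket on `Hom(C,L)` is symmetric and satisfies the Jacobi identity. -/
theorem convBracket_symm_jacobi_of_skew_cocomm (Δ : C →ₗ[k] C ⊗[k] C)
    (hΔ : (TensorProduct.assoc k C C C).toLinearMap ∘ₗ
            TensorProduct.map Δ (LinearMap.id : C →ₗ[k] C) ∘ₗ Δ
          = TensorProduct.map (LinearMap.id : C →ₗ[k] C) Δ ∘ₗ Δ)
    (hskew : (TensorProduct.comm k C C).toLinearMap ∘ₗ Δ = -Δ) :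
    (∀ f g : C →ₗ[k] L, convBr k C L Δ f g = convBr k C L Δ g f) ∧
    (∀ f g h : C →ₗ[k] L,
      convBr k C L Δ f (convBr k C L Δ g h)
        + convBr k C L Δ h (convBr k C L Δ f g)
        + convBr k C L Δ g (convBr k C L Δ h f) = 0) := by
  -- pointwise skew cocommutativity
  have hsk : ∀ c : C, (TensorProduct.comm k C C) (Δ c) = -(Δ c) := by
    intro c
    exact LinearMap.congr_fun hskew c
  have hsk' : ∀ c : C, Δ c = -((TensorProduct.comm k C C) (Δ c)) := by
    intro c
    rw [hsk]; simp
  constructor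
  · intro f g
    ext c
    show bracketLin k L (TensorProduct.map f g (Δ c)) =
      bracketLin k L (TensorProduct.map g f (Δ c))
    conv_lhs => rw [hsk' c]
    rw [map_neg, map_neg, bracketLin_comm_swap, neg_neg]
  · intro f g h
    -- abbreviations
    set σ : C ⊗[k] (C ⊗[k] C) →ₗ[k] C ⊗[k] (C ⊗[k] C) :=
      (TensorProduct.assoc k C C C).toLinearMap ∘ₗ
        TensorProduct.map (TensorProduct.comm k C C).toLinearMap LinearMap.id ∘ₗ
          (TensorProduct.assoc k C C C).symm.toLinearMap ∘ₗ
            TensorProduct.map LinearMap.id (TensorProduct.comm k C C).toLinearMap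
      with hσdef
    ext c
    set t : C ⊗[k] (C ⊗[k] C) :=
      TensorProduct.map (LinearMap.id : C →ₗ[k] C) Δ (Δ c) with ht
    -- t is invariant under the cyclic permutation σ
    have h23 : TensorProduct.map (LinearMap.id : C →ₗ[k] C)
        (TensorProduct.comm k C C).toLinearMap t = -t := by
      rw [ht, ← LinearMap.comp_apply, ← TensorProduct.map_comp]
      rw [show (TensorProduct.comm k C C).toLinearMap ∘ₗ Δ = -Δ from hskew]
      rw [LinearMap.id_comp, map_neg_right]
      simp
    have hassoc : ∀ u : C, (TensorProduct.assoc k C C C)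
        (TensorProduct.map Δ (LinearMap.id : C →ₗ[k] C) (Δ u)) =
        TensorProduct.map (LinearMap.id : C →ₗ[k] C) Δ (Δ u) := by
      intro u
      exact LinearMap.congr_fun hΔ u
    have h12 : TensorProduct.map (TensorProduct.comm k C C).toLinearMap
        (LinearMap.id : C →ₗ[k] C)
        (TensorProduct.map Δ (LinearMap.id : C →ₗ[k] C) (Δ c)) =
        -(TensorProduct.map Δ (LinearMap.id : C →ₗ[k] C) (Δ c)) := by
      rw [← LinearMap.comp_apply, ← TensorProduct.map_comp]
      rw [show (TensorProduct.comm k C C).toLinearMap ∘ₗ Δ = -Δ from hskew]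
      rw [LinearMap.id_comp, map_neg_left]
      simp
    have hσt : σ t = t := by
      rw [hσdef]
      simp only [LinearMap.comp_apply, LinearEquiv.coe_coe]
      rw [h23, map_neg, map_neg, map_neg]
      have hsymm : (TensorProduct.assoc k C C C).symm t =
          TensorProduct.map Δ (LinearMap.id : C →ₗ[k] C) (Δ c) := by
        rw [ht, ← hassoc c]
        simp
      rw [hsymm, h12, map_neg, hassoc c, ← ht, neg_neg]
    -- the three convolution terms as maps applied to t
    have hconv : ∀ f' g' h' : C →ₗ[k] L,
        convBr k C L Δ f' (convBr k C L Δ g' h') c =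
        bracketLin k L (TensorProduct.map f'
          (bracketLin k L ∘ₗ TensorProduct.map g' h') t) := by
      intro f' g' h'
      show bracketLin k L (TensorProduct.map f'
        ((bracketLin k L ∘ₗ TensorProduct.map g' h') ∘ₗ Δ) (Δ c)) = _
      rw [show TensorProduct.map f' ((bracketLin k L ∘ₗ TensorProduct.map g' h') ∘ₗ Δ) =
          TensorProduct.map f' (bracketLin k L ∘ₗ TensorProduct.map g' h') ∘ₗ
            TensorProduct.map LinearMap.id Δ from by
        rw [← TensorProduct.map_comp, LinearMap.comp_id]]
      rw [ht]
      rfl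
    -- generic Jacobi identity on C ⊗ (C ⊗ C)
    have jac : ∀ u : C ⊗[k] (C ⊗[k] C),
        bracketLin k L (TensorProduct.map f
            (bracketLin k L ∘ₗ TensorProduct.map g h) u)
          + bracketLin k L (TensorProduct.map h
            (bracketLin k L ∘ₗ TensorProduct.map f g) (σ u))
          + bracketLin k L (TensorProduct.map g
            (bracketLin k L ∘ₗ TensorProduct.map h f) (σ (σ u))) = 0 := by
      intro u
      induction u using TensorProduct.induction_on with
      | zero => simp
      | tmul x v =>
        induction v using TensorProduct.induction_on with
        | zero => simp
        | tmul y z =>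
          have hσp : ∀ (a b c' : C), σ (a ⊗ₜ[k] (b ⊗ₜ[k] c')) = c' ⊗ₜ[k] (a ⊗ₜ[k] b) := by
            intro a b c'
            rw [hσdef]
            simp
          rw [hσp, hσp]
          simp only [TensorProduct.map_tmul, LinearMap.comp_apply, bracketLin_tmul]
          have hj := lie_jacobi (f x) (g y) (h z)
          rw [← hj]
          abel
        | add a b ha hb =>
          simp only [tmul_add, map_add] at *
          have hcomb := congrArg₂ (· + ·) ha hb
          simp only [add_zero] at hcomb
          rw [← hcomb]
          abel
      | add a b ha hb =>
        simp only [map_add] at *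
        have hcomb := congrArg₂ (· + ·) ha hb
        simp only [add_zero] at hcomb
        rw [← hcomb]
        abel
    rw [LinearMap.add_apply, LinearMap.add_apply, LinearMap.zero_apply,
      hconv f g h, hconv h f g, hconv g h f]
    have h2 : bracketLin k L (TensorProduct.map h
        (bracketLin k L ∘ₗ TensorProduct.map f g) t) =
        bracketLin k L (TensorProduct.map h
        (bracketLin k L ∘ₗ TensorProduct.map f g) (σ t)) := by rw [hσt]
    have h3 : bracketLin k L (TensorProduct.map g
        (bracketLin k L ∘ₗ TensorProduct.map h f) t) =
        bracketLin k L (TensorProduct.map g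
        (bracketLin k L ∘ₗ TensorProduct.map h f) (σ (σ t))) := by rw [hσt, hσt]
    rw [h2, h3]
    exact jac t
end

section
/- Let A be a commutative (not necessarily associative) algebra over a field of characteristic ≠ 2,3 in which the Jacobi identity (fg)h + (hf)g + (gh)f = 0 holds for the product. Then A is a Jordan algebra: fg = gf and (f²g)f = f²(gf) for all f,g. In particular f²·f = 0 and (f²g)f + f²(gf) = 0. -/
/-- A commutative (not necessarily associative) bilinear product over a field of
characteristic ≠ 2, 3 satisfying the Jacobi identity `(fg)h + (hf)g + (gh)f = 0`
is a Jordan algebra: `fg = gf` and `(f²g)f = f²(gf)`; in particular `f²·f = 0`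
and `(f²g)f + f²(gf) = 0`. -/
theorem jordan_of_comm_jacobi (k A : Type*) [Field k] [AddCommGroup A] [Module k A]
    (h2 : (2 : k) ≠ 0) (h3 : (3 : k) ≠ 0)
    (mul : A →ₗ[k] A →ₗ[k] A)
    (hcomm : ∀ f g : A, mul f g = mul g f)
    (hJ : ∀ f g h : A, mul (mul f g) h + mul (mul h f) g + mul (mul g h) f = 0) :
    ∀ f g : A,
      mul f g = mul g f ∧
      mul (mul (mul f f) g) f = mul (mul f f) (mul g f) ∧
      mul (mul f f) f = 0 ∧
      mul (mul (mul f f) g) f + mul (mul f f) (mul g f) = 0 := by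
  intro f g
  -- f² f = 0
  have hFf : mul (mul f f) f = 0 := by
    have j := hJ f f f
    have h3' : (3 : k) • mul (mul f f) f = 0 := by
      linear_combination (norm := module) j
    rcases smul_eq_zero.mp h3' with h | h
    · exact absurd h h3
    · exact h
  -- f² x = -2 (f x) f
  have h1 : ∀ x : A, mul (mul f f) x = (-2 : k) • mul (mul f x) f := by
    intro x
    have j := hJ f x f
    rw [hcomm x f] at j
    linear_combination (norm := module) j
  set t : A := mul (mul f g) f with ht
  have hA : mul (mul (mul f f) g) f = (-2 : k) • mul t f := by
    rw [h1 g, LinearMap.map_smul₂]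
  have hB : mul (mul f f) (mul g f) = (-2 : k) • mul t f := by
    rw [h1 (mul g f), hcomm f (mul g f), hcomm g f]
  have j2 := hJ (mul f f) g f
  rw [hcomm f (mul f f), hFf, map_zero, LinearMap.zero_apply,
    hcomm (mul g f) (mul f f)] at j2
  -- j2 : mul (mul (mul f f) g) f + 0 + mul (mul f f) (mul g f) = 0
  rw [hA, hB] at j2
  have h4 : (4 : k) • mul t f = 0 := by
    linear_combination (norm := module) -j2
  have htf : mul t f = 0 := by
    rcases smul_eq_zero.mp h4 with h | h
    · exact absurd h (by
        have : (4 : k) = 2 * 2 := by norm_num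
        rw [this]
        exact mul_ne_zero h2 h2)
    · exact h
  refine ⟨hcomm f g, ?_, hFf, ?_⟩
  · rw [hA, hB]
  · rw [hA, hB, htf, smul_zero, add_zero]
end

section
/- Let f_k : L^⊗k → L and f_{n−k+1} : L^⊗(n−k+1) → L be skew-symmetric multilinear maps. Then the map f : L^⊗n → L given by f(x₁,…,x_n) = Σ_σ (−1)^σ f_{n−k+1}(f_k(x_{σ(1)},…,x_{σ(k)}), x_{σ(k+1)},…,x_{σ(n)}), where σ runs over all (k, n−k)-unshuffles, is skew-symmetric. -/
open scoped Classical

variable (R L : Type*) [Field R] [AddCommGroup L] [Module R L]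

/-- The composition `f(x₁,…,x_n) = Σ_σ (−1)^σ f_{l+1}(f_p(x_{σ(1)},…,x_{σ(p)}),
x_{σ(p+1)},…,x_{σ(n)})` summed over all `(p, l)`-unshuffles `σ` (here `n = p + l`). -/
noncomputable def unshuffleComp (p l : ℕ)
    (fp : MultilinearMap R (fun _ : Fin p => L) L)
    (fl : MultilinearMap R (fun _ : Fin (l + 1) => L) L)
    (x : Fin (p + l) → L) : L :=
  ∑ σ : Equiv.Perm (Fin (p + l)),
    if (∀ i j : Fin p, i < j → σ (Fin.castAdd l i) < σ (Fin.castAdd l j)) ∧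
       (∀ i j : Fin l, i < j → σ (Fin.natAdd p i) < σ (Fin.natAdd p j)) then
      (Equiv.Perm.sign σ : ℤ) •
        fl (Fin.cons (fp (fun i : Fin p => x (σ (Fin.castAdd l i))))
          (fun j : Fin l => x (σ (Fin.natAdd p j))))
    else 0

/-! Every permutation of `Fin (p + l)` is uniquely an unshuffle times a block permutation
(one permuting `Fin p` and `Fin l` separately), so the unshuffles form a left transversal of
the subgroup of block permutations. Because `f_p` and `f_{l+1}` are skew-symmetric, the signed
summand `σ ↦ sign σ • f_{l+1}(f_p(x ∘ σ ∘ castAdd), x ∘ σ ∘ natAdd)` is invariant under right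
multiplication by block permutations. The sum of such a function over a left transversal does
not depend on the transversal, so it is invariant under left translation by `π`; pulling
`sign π` out of the summand gives the claim. -/

open Equiv Equiv.Perm Subgroup
open scoped Pointwise

section Transversal

variable {G M : Type*} [Group G] [AddCommMonoid M] {H : Subgroup G}

theorem Subgroup.isComplement_of_exists_mul_mem {S : Set G}
    (hex : ∀ g, ∃ h ∈ H, g * h ∈ S) (huniq : ∀ s ∈ S, ∀ h ∈ H, s * h ∈ S → h = 1) :
    IsComplement S H := by
  refine isComplement_iff_existsUnique_inv_mul_mem.mpr fun g => ?_
  obtain ⟨h, hH, hS⟩ := hex g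
  refine ⟨⟨g * h, hS⟩, by simpa using H.inv_mem hH, fun ⟨s, hs⟩ hsg => ?_⟩
  have : (g * h)⁻¹ * s = 1 :=
    huniq _ hS _ (by simpa [mul_assoc] using H.mul_mem (H.inv_mem hH) (H.inv_mem hsg))
      (by rwa [mul_inv_cancel_left])
  exact Subtype.ext (inv_mul_eq_one.mp this).symm

theorem Subgroup.IsComplement.sum_eq_sum {S T : Finset G}
    (hS : IsComplement (S : Set G) H) (hT : IsComplement (T : Set G) H) {g : G → M}
    (hg : ∀ x, ∀ h ∈ H, g (x * h) = g x) :
    ∑ x ∈ S, g x = ∑ x ∈ T, g x := by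
  rw [← Finset.sum_coe_sort S, ← Finset.sum_coe_sort T]
  refine Fintype.sum_equiv (hS.leftQuotientEquiv.symm.trans hT.leftQuotientEquiv) _ _
    fun s => ?_
  set t := hS.leftQuotientEquiv.symm.trans hT.leftQuotientEquiv s
  have hst : ((s : G) : G ⧸ H) = ((t : G) : G ⧸ H) :=
    (hT.quotientGroupMk_leftQuotientEquiv _).symm
  rw [← mul_inv_cancel_left (s : G) t, hg _ _ (QuotientGroup.eq.mp hst)]

theorem Subgroup.IsComplement.sum_mul_left {S : Finset G}
    (hS : IsComplement (S : Set G) H) {g : G → M} (hg : ∀ x, ∀ h ∈ H, g (x * h) = g x) (a : G) :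
    ∑ x ∈ S, g (a * x) = ∑ x ∈ S, g x := by
  have haS : IsComplement ((a • S : Finset G) : Set G) H := by
    rw [Finset.coe_smul_finset]
    exact (a • (⟨S, hS⟩ : H.LeftTransversal)).2
  rw [← haS.sum_eq_sum hS hg, Finset.smul_finset_def,
    Finset.sum_image fun x _ y _ hxy => smul_left_cancel a hxy]
  rfl

end Transversal

section Unshuffle

variable {p l : ℕ}

def blockPermHom (p l : ℕ) : Perm (Fin p) × Perm (Fin l) →* Perm (Fin (p + l)) :=
  finSumFinEquiv.permCongrHom.toMonoidHom.comp (sumCongrHom (Fin p) (Fin l))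

@[simp]
theorem blockPermHom_apply_castAdd (b : Perm (Fin p) × Perm (Fin l)) (i : Fin p) :
    blockPermHom p l b (Fin.castAdd l i) = Fin.castAdd l (b.1 i) := by
  simp [blockPermHom, permCongrHom_coe, permCongr_apply]

@[simp]
theorem blockPermHom_apply_natAdd (b : Perm (Fin p) × Perm (Fin l)) (j : Fin l) :
    blockPermHom p l b (Fin.natAdd p j) = Fin.natAdd p (b.2 j) := by
  simp [blockPermHom, permCongrHom_coe, permCongr_apply]

theorem sign_blockPermHom (b : Perm (Fin p) × Perm (Fin l)) :
    sign (blockPermHom p l b) = sign b.1 * sign b.2 := by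
  simp [blockPermHom, permCongrHom_coe, sign_permCongr, sign_sumCongr]

theorem mul_blockPermHom_comp_castAdd (σ : Perm (Fin (p + l)))
    (b : Perm (Fin p) × Perm (Fin l)) :
    (σ * blockPermHom p l b) ∘ Fin.castAdd l = σ ∘ Fin.castAdd l ∘ b.1 := by
  ext; simp

theorem mul_blockPermHom_comp_natAdd (σ : Perm (Fin (p + l)))
    (b : Perm (Fin p) × Perm (Fin l)) :
    (σ * blockPermHom p l b) ∘ Fin.natAdd p = σ ∘ Fin.natAdd p ∘ b.2 := by
  ext; simp

def unshuffles (p l : ℕ) : Finset (Perm (Fin (p + l))) :=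
  {σ | StrictMono (σ ∘ Fin.castAdd l) ∧ StrictMono (σ ∘ Fin.natAdd p)}

theorem exists_mul_blockPermHom_mem_unshuffles (σ : Perm (Fin (p + l))) :
    ∃ b, σ * blockPermHom p l b ∈ unshuffles p l := by
  refine ⟨(Tuple.sort (σ ∘ Fin.castAdd l), Tuple.sort (σ ∘ Fin.natAdd p)),
    Finset.mem_filter.mpr ⟨Finset.mem_univ _, ?_, ?_⟩⟩
  · rw [mul_blockPermHom_comp_castAdd]
    exact (Tuple.monotone_sort _).strictMono_of_injective
      ((σ.injective.comp (Fin.castAdd_injective p l)).comp (Tuple.sort _).injective)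
  · rw [mul_blockPermHom_comp_natAdd]
    exact (Tuple.monotone_sort _).strictMono_of_injective
      ((σ.injective.comp (Fin.natAdd_injective l p)).comp (Tuple.sort _).injective)

theorem eq_one_of_mul_blockPermHom_mem_unshuffles {σ : Perm (Fin (p + l))}
    (hσ : σ ∈ unshuffles p l) {b : Perm (Fin p) × Perm (Fin l)}
    (hb : σ * blockPermHom p l b ∈ unshuffles p l) : b = 1 := by
  simp only [unshuffles, Finset.mem_filter, Finset.mem_univ, true_and,
    mul_blockPermHom_comp_castAdd, mul_blockPermHom_comp_natAdd] at hσ hb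
  refine Prod.ext ((monotone_iff _).mp ?_) ((monotone_iff _).mp ?_)
  · exact StrictMono.monotone fun i j hij => hσ.1.lt_iff_lt.mp (hb.1 hij)
  · exact StrictMono.monotone fun i j hij => hσ.2.lt_iff_lt.mp (hb.2 hij)

theorem isComplement_unshuffles :
    IsComplement (unshuffles p l : Set (Perm (Fin (p + l)))) (blockPermHom p l).range := by
  refine isComplement_of_exists_mul_mem (fun σ => ?_) ?_
  · obtain ⟨b, hb⟩ := exists_mul_blockPermHom_mem_unshuffles σ
    exact ⟨_, ⟨b, rfl⟩, hb⟩
  · rintro σ hσ _ ⟨b, rfl⟩ hb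
    rw [eq_one_of_mul_blockPermHom_mem_unshuffles hσ hb, map_one]

end Unshuffle

section Multilinear

variable {A M : Type*} [Semiring A] [AddCommGroup M] [Module A M] {n p l : ℕ}

theorem MultilinearMap.cons_zsmul (f : MultilinearMap A (fun _ : Fin (n + 1) => M) M)
    (c : ℤ) (a : M) (z : Fin n → M) :
    f (Fin.cons (c • a) z) = c • f (Fin.cons a z) := by
  simpa only [f.toLinearMap_apply, Fin.update_cons_zero] using
    map_zsmul (f.toLinearMap (Fin.cons a z) 0) c a

theorem MultilinearMap.cons_comp_perm (f : MultilinearMap A (fun _ : Fin (n + 1) => M) M)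
    (hf : ∀ (σ : Perm (Fin (n + 1))) (x : Fin (n + 1) → M), f (x ∘ σ) = (sign σ : ℤ) • f x)
    (τ : Perm (Fin n)) (a : M) (z : Fin n → M) :
    f (Fin.cons a (z ∘ τ)) = (sign τ : ℤ) • f (Fin.cons a z) := by
  have : (Fin.cons a (z ∘ τ) : Fin (n + 1) → M) = Fin.cons a z ∘ decomposeFin.symm (0, τ) := by
    ext i
    cases i using Fin.cases <;> simp [decomposeFin_symm_apply_succ]
  rw [this, hf, decomposeFin.symm_sign, if_pos rfl, one_mul]

def blockComp (fp : MultilinearMap A (fun _ : Fin p => M) M)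
    (fl : MultilinearMap A (fun _ : Fin (l + 1) => M) M) (y : Fin (p + l) → M) : M :=
  fl (Fin.cons (fp (y ∘ Fin.castAdd l)) (y ∘ Fin.natAdd p))

section

variable {fp : MultilinearMap A (fun _ : Fin p => M) M}
  {fl : MultilinearMap A (fun _ : Fin (l + 1) => M) M}

theorem blockComp_comp_blockPermHom
    (hfp : ∀ (σ : Perm (Fin p)) (x : Fin p → M), fp (x ∘ σ) = (sign σ : ℤ) • fp x)
    (hfl : ∀ (σ : Perm (Fin (l + 1))) (x : Fin (l + 1) → M), fl (x ∘ σ) = (sign σ : ℤ) • fl x)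
    (y : Fin (p + l) → M) (b : Perm (Fin p) × Perm (Fin l)) :
    blockComp fp fl (y ∘ blockPermHom p l b) =
      (sign (blockPermHom p l b) : ℤ) • blockComp fp fl y := by
  have hc : (y ∘ blockPermHom p l b) ∘ Fin.castAdd l = (y ∘ Fin.castAdd l) ∘ b.1 := by
    ext; simp
  have hn : (y ∘ blockPermHom p l b) ∘ Fin.natAdd p = (y ∘ Fin.natAdd p) ∘ b.2 := by
    ext; simp
  rw [blockComp, hc, hn, hfp, fl.cons_zsmul, fl.cons_comp_perm hfl, smul_smul,
    sign_blockPermHom, Units.val_mul, blockComp]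

theorem sign_smul_blockComp_comp_mul_blockPermHom
    (hfp : ∀ (σ : Perm (Fin p)) (x : Fin p → M), fp (x ∘ σ) = (sign σ : ℤ) • fp x)
    (hfl : ∀ (σ : Perm (Fin (l + 1))) (x : Fin (l + 1) → M), fl (x ∘ σ) = (sign σ : ℤ) • fl x)
    (y : Fin (p + l) → M) (σ : Perm (Fin (p + l))) (b : Perm (Fin p) × Perm (Fin l)) :
    (sign (σ * blockPermHom p l b) : ℤ) • blockComp fp fl (y ∘ ⇑(σ * blockPermHom p l b)) =
      (sign σ : ℤ) • blockComp fp fl (y ∘ σ) := by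
  rw [coe_mul, ← Function.comp_assoc, blockComp_comp_blockPermHom hfp hfl, smul_smul,
    ← Units.val_mul, Perm.sign_mul, mul_assoc, Int.units_mul_self, mul_one]

end

end Multilinear

theorem unshuffleComp_eq_sum (p l : ℕ) (fp : MultilinearMap R (fun _ : Fin p => L) L)
    (fl : MultilinearMap R (fun _ : Fin (l + 1) => L) L) (x : Fin (p + l) → L) :
    unshuffleComp R L p l fp fl x =
      ∑ σ ∈ unshuffles p l, (sign σ : ℤ) • blockComp fp fl (x ∘ σ) := by
  rw [unshuffleComp, unshuffles, Finset.sum_filter]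
  exact Finset.sum_congr rfl fun σ _ => if_congr Iff.rfl rfl rfl

/-- If `f_p : L^⊗p → L` and `f_{l+1} : L^⊗(l+1) → L` are skew-symmetric multilinear
maps, then their composition over `(p,l)`-unshuffles is skew-symmetric. -/
theorem unshuffleComp_skew (p l : ℕ)
    (fp : MultilinearMap R (fun _ : Fin p => L) L)
    (fl : MultilinearMap R (fun _ : Fin (l + 1) => L) L)
    (hfp : ∀ (σ : Equiv.Perm (Fin p)) (x : Fin p → L),
      fp (x ∘ σ) = (Equiv.Perm.sign σ : ℤ) • fp x)
    (hfl : ∀ (σ : Equiv.Perm (Fin (l + 1))) (x : Fin (l + 1) → L),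
      fl (x ∘ σ) = (Equiv.Perm.sign σ : ℤ) • fl x)
    (π : Equiv.Perm (Fin (p + l))) (x : Fin (p + l) → L) :
    unshuffleComp R L p l fp fl (x ∘ π)
      = (Equiv.Perm.sign π : ℤ) • unshuffleComp R L p l fp fl x := by
  set F : Perm (Fin (p + l)) → L := fun σ => (sign σ : ℤ) • blockComp fp fl (x ∘ σ)
  have hF : ∀ σ, ∀ h ∈ (blockPermHom p l).range, F (σ * h) = F σ := by
    rintro σ _ ⟨b, rfl⟩
    exact sign_smul_blockComp_comp_mul_blockPermHom hfp hfl x σ b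
  calc unshuffleComp R L p l fp fl (x ∘ π)
      = ∑ σ ∈ unshuffles p l, (sign π : ℤ) • F (π * σ) := by
        rw [unshuffleComp_eq_sum]
        refine Finset.sum_congr rfl fun σ _ => ?_
        rw [smul_smul, ← Units.val_mul, Perm.sign_mul, ← mul_assoc, Int.units_mul_self, one_mul,
          coe_mul, Function.comp_assoc]
    _ = (sign π : ℤ) • unshuffleComp R L p l fp fl x := by
        rw [← Finset.smul_sum, isComplement_unshuffles.sum_mul_left hF, unshuffleComp_eq_sum]
end
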